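/- Let K < 0 be a real number and let f: ℝ → ℝ be C² with f(t) > 0 and f''(t) + K f(t) ≤ 0 for all t ∈ ℝ. If sup over t ∈ ℝ of (f'(t)² + K f(t)²) ≥ 0, then sup over t ∈ ℝ of (f'(t)² + K f(t)²) = 0 and inf over t ∈ ℝ of f(t) = 0. -/

import Mathlib

/-! The energy `E = (f')² + K f²` has derivative `2 f' (f'' + K f)`, so it is nondecreasing while
`f` is nonincreasing. If `E(t₀) > K m²` with `m = inf f` and `f'(t₀) ≤ 0`, then along `[t₀, ∞)` the
energy stays above `E(t₀)`, which keeps `(f')² ≥ E(t₀) - K m² > 0`; hence `f'` never returns to `0`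
and `f` decreases at a uniform rate, contradicting `f ≥ m`. Reflecting `t ↦ -t` handles `f'(t₀) ≥ 0`.
So `E ≤ K m² ≤ 0` everywhere, and `sup E ≥ 0` forces `m = 0`. -/

open Set Filter Topology

noncomputable def energy (K : ℝ) (f : ℝ → ℝ) (t : ℝ) : ℝ := deriv f t ^ 2 + K * f t ^ 2

variable {K m : ℝ} {f : ℝ → ℝ}

theorem hasDerivAt_energy (hf : ContDiff ℝ 2 f) (t : ℝ) :
    HasDerivAt (energy K f) (2 * deriv f t * (deriv (deriv f) t + K * f t)) t := by
  have hf' := (hf.differentiable_deriv_two t).hasDerivAt.pow 2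
  have hf0 := ((hf.differentiable (by norm_num) t).hasDerivAt.pow 2).const_mul K
  exact (hf'.add hf0).congr_deriv (by push_cast; ring)

theorem monotoneOn_energy (hf : ContDiff ℝ 2 f) (hineq : ∀ t, deriv (deriv f) t + K * f t ≤ 0)
    {D : Set ℝ} (hD : Convex ℝ D) (hD' : ∀ t ∈ D, deriv f t ≤ 0) : MonotoneOn (energy K f) D := by
  have hE := hasDerivAt_energy (K := K) hf
  refine monotoneOn_of_deriv_nonneg hD (fun t _ => (hE t).continuousAt.continuousWithinAt)
    (fun t _ => (hE t).differentiableAt.differentiableWithinAt) fun t ht => ?_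
  rw [(hE t).deriv]
  nlinarith [hD' t (interior_subset ht), hineq t]

theorem energy_le_energy_of_deriv_nonpos (hK : K ≤ 0) (hf : ContDiff ℝ 2 f)
    (hineq : ∀ t, deriv (deriv f) t + K * f t ≤ 0) (hm : 0 ≤ m) (hmf : ∀ t, m ≤ f t) {t₀ : ℝ}
    (hE : K * m ^ 2 < energy K f t₀) (ht₀ : deriv f t₀ ≤ 0) {t : ℝ} (ht : t₀ ≤ t) :
    deriv f t ≤ 0 ∧ energy K f t₀ ≤ energy K f t := by
  have hf' : Continuous (deriv f) := hf.continuous_deriv (by norm_num)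
  have hE_cont : Continuous (energy K f) := continuous_iff_continuousAt.2 fun t =>
    (hasDerivAt_energy hf t).continuousAt
  set S := {x | deriv f x ≤ 0 ∧ energy K f t₀ ≤ energy K f x}
  suffices Icc t₀ t ⊆ S from this ⟨ht, le_rfl⟩
  refine IsClosed.Icc_subset_of_forall_mem_nhdsWithin ?_ ⟨ht₀, le_rfl⟩ fun x ⟨⟨hx, hEx⟩, _⟩ => ?_
  · exact ((isClosed_le hf' continuous_const).inter
      (isClosed_le continuous_const hE_cont)).inter isClosed_Icc
  · have hx_neg : deriv f x < 0 := by
      have := mul_le_mul_of_nonpos_left (pow_le_pow_left₀ hm (hmf x) 2) hK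
      have : 0 < deriv f x ^ 2 := by unfold energy at hE hEx; linarith
      exact lt_of_le_of_ne hx (by rintro h; simp [h] at this)
    obtain ⟨l, u, ⟨hlx, hxu⟩, hlu⟩ :=
      mem_nhds_iff_exists_Ioo_subset.1 (hf'.continuousAt.eventually_lt continuousAt_const hx_neg)
    have hmono : MonotoneOn (energy K f) (Ico x u) := monotoneOn_energy hf hineq (convex_Ico x u)
      fun y hy => (hlu ⟨hlx.trans_le hy.1, hy.2⟩).le
    filter_upwards [Ioo_mem_nhdsGT hxu] with y hy
    exact ⟨(hlu ⟨hlx.trans hy.1, hy.2⟩).le,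
      hEx.trans (hmono ⟨le_rfl, hxu⟩ (Ioo_subset_Ico_self hy) hy.1.le)⟩

theorem energy_le_of_deriv_nonpos (hK : K ≤ 0) (hf : ContDiff ℝ 2 f)
    (hineq : ∀ t, deriv (deriv f) t + K * f t ≤ 0) (hm : 0 ≤ m) (hmf : ∀ t, m ≤ f t) {t₀ : ℝ}
    (ht₀ : deriv f t₀ ≤ 0) : energy K f t₀ ≤ K * m ^ 2 := by
  by_contra! hE
  set c := energy K f t₀ - K * m ^ 2
  have hc : 0 < Real.sqrt c := Real.sqrt_pos.2 (by linarith)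
  have hslope : ∀ t ∈ Ici t₀, deriv f t ≤ -Real.sqrt c := by
    intro t ht
    obtain ⟨hd, hEt⟩ := energy_le_energy_of_deriv_nonpos hK hf hineq hm hmf hE ht₀ ht
    have := mul_le_mul_of_nonpos_left (pow_le_pow_left₀ hm (hmf t) 2) hK
    have : c ≤ deriv f t ^ 2 := by simp only [c, energy] at hEt ⊢; linarith
    nlinarith [Real.sq_sqrt (sub_pos.2 hE).le, Real.sqrt_nonneg c]
  have hfd : Differentiable ℝ f := hf.differentiable (by norm_num)
  set t := t₀ + (f t₀ - m + 1) / Real.sqrt c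
  have ht : t₀ ≤ t := le_add_of_nonneg_right (div_nonneg (by linarith [hmf t₀]) hc.le)
  have hdecr : f t - f t₀ ≤ -Real.sqrt c * (t - t₀) :=
    (convex_Ici t₀).image_sub_le_mul_sub_of_deriv_le hfd.continuous.continuousOn
      hfd.differentiableOn (fun x hx => hslope x (interior_subset hx)) t₀ self_mem_Ici t ht ht
  have : Real.sqrt c * (t - t₀) = f t₀ - m + 1 := by simp only [t]; field_simp; ring
  linarith [hmf t]

theorem energy_le (hK : K ≤ 0) (hf : ContDiff ℝ 2 f)
    (hineq : ∀ t, deriv (deriv f) t + K * f t ≤ 0) (hm : 0 ≤ m) (hmf : ∀ t, m ≤ f t) (t : ℝ) :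
    energy K f t ≤ K * m ^ 2 := by
  rcases le_total (deriv f t) 0 with ht | ht
  · exact energy_le_of_deriv_nonpos hK hf hineq hm hmf ht
  · have hderiv : ∀ s, deriv (fun s => f (-s)) s = -deriv f (-s) := fun s => deriv_comp_neg f s
    have hderiv2 : ∀ s, deriv (deriv fun s => f (-s)) s = deriv (deriv f) (-s) := fun s => by
      simp only [funext hderiv, deriv.fun_neg', deriv_comp_neg, neg_neg]
    have := energy_le_of_deriv_nonpos hK (f := fun s => f (-s)) (hf.comp contDiff_neg) (fun s => by
      simpa only [hderiv2] using hineq (-s)) hm (fun s => hmf (-s)) (t₀ := -t)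
      (by simpa only [hderiv, neg_neg, neg_nonpos] using ht)
    simpa only [energy, hderiv, neg_neg, neg_sq] using this

/-- For `K < 0` and a positive `C²` solution of `f'' + K f ≤ 0` on `ℝ`, if
`sup ((f')² + K f²) ≥ 0` then this supremum is `0` and `inf f = 0`. -/
theorem statement_5 (K : ℝ) (hK : K < 0) (f : ℝ → ℝ) (hf : ContDiff ℝ 2 f)
    (hpos : ∀ t, 0 < f t)
    (hineq : ∀ t, deriv (deriv f) t + K * f t ≤ 0)
    (hsup : 0 ≤ sSup (Set.range fun t => deriv f t ^ 2 + K * f t ^ 2)) :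
    sSup (Set.range fun t => deriv f t ^ 2 + K * f t ^ 2) = 0 ∧
    sInf (Set.range f) = 0 := by
  set m := sInf (Set.range f)
  have hbdd : BddBelow (range f) := ⟨0, forall_mem_range.2 fun t => (hpos t).le⟩
  have hm : 0 ≤ m := le_csInf (range_nonempty f) (forall_mem_range.2 fun t => (hpos t).le)
  have hmf (t : ℝ) : m ≤ f t := csInf_le hbdd (mem_range_self t)
  have hsup_le : sSup (range fun t => deriv f t ^ 2 + K * f t ^ 2) ≤ K * m ^ 2 :=
    csSup_le (range_nonempty _) (forall_mem_range.2 (energy_le hK.le hf hineq hm hmf))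
  have hm0 : m = 0 := by
    have : 0 ≤ K * m ^ 2 := hsup.trans hsup_le
    exact pow_eq_zero_iff two_ne_zero |>.1 (by nlinarith [sq_nonneg m])
  rw [hm0] at hsup_le
  exact ⟨by linarith, hm0⟩
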